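/- arXiv:0907.0402 — 5 statements merged into one kernel-verified Lean document; each statement's English description precedes it below -/
import Mathlib

section
/- If a group G acts on a metric space X by isometries and every orbit G·a has compact closure, then every map ρ : X → X that is a pointwise limit of elements of G is surjective. -/
/-!
A pointwise limit `ρ` of isometries is an isometric embedding, and it maps the compact orbit
closure `K` of any point `y` into itself. An isometric self-embedding of a compact set is onto:
the iterates `ρ^[n] y` stay in `K`, so two of them, `ρ^[m] y` and `ρ^[m + k + 1] y`, are
`ε`-close, and since `ρ^[m]` is isometric, `y` is `ε`-close to `ρ^[k + 1] y ∈ ρ '' K`. Hence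
`y` lies in the closure of the compact set `ρ '' K`, that is, in `ρ '' K`.
-/

open Metric Set

protected theorem Isometry.iterate {α : Type*} [PseudoEMetricSpace α] {f : α → α}
    (hf : Isometry f) : ∀ n, Isometry f^[n]
  | 0 => isometry_id
  | n + 1 => (hf.iterate n).comp hf

theorem isometry_of_forall_approx {X Y : Type*} [PseudoMetricSpace X] [PseudoMetricSpace Y]
    {f : X → Y}
    (hf : ∀ a b : X, ∀ ε > 0, ∃ g : X → Y, Isometry g ∧ dist (g a) (f a) < ε ∧
      dist (g b) (f b) < ε) :
    Isometry f := by
  refine Isometry.of_dist_eq fun a b => (eq_of_forall_dist_le fun ε hε => ?_).symm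
  obtain ⟨g, hg, ha, hb⟩ := hf a b (ε / 2) (half_pos hε)
  calc dist (dist a b) (dist (f a) (f b))
      = dist (dist (g a) (g b)) (dist (f a) (f b)) := by rw [hg.dist_eq]
    _ ≤ dist (g a) (f a) + dist (g b) (f b) := dist_dist_dist_le _ _ _ _
    _ ≤ ε := by linarith

section Recurrence

variable {X : Type*} {f : X → X} {K : Set X}

theorem Isometry.exists_dist_iterate_succ_lt [PseudoMetricSpace X] (hf : Isometry f)
    (hK : IsCompact K) (hfK : MapsTo f K K) {y : X} (hy : y ∈ K) {ε : ℝ} (hε : 0 < ε) :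
    ∃ k, dist (f^[k + 1] y) y < ε := by
  obtain ⟨_, -, φ, hφ, hlim⟩ := hK.tendsto_subseq fun n => hfK.iterate n hy
  obtain ⟨N, hN⟩ := Metric.cauchySeq_iff'.1 hlim.cauchySeq ε hε
  obtain ⟨k, hk⟩ := Nat.exists_eq_add_of_lt (hφ N.lt_succ_self)
  refine ⟨k, ?_⟩
  have hclose : dist (f^[φ (N + 1)] y) (f^[φ N] y) < ε := hN (N + 1) N.le_succ
  rwa [hk, add_assoc, Function.iterate_add_apply, (hf.iterate _).dist_eq] at hclose

theorem Isometry.surjOn_of_isCompact [MetricSpace X] (hf : Isometry f) (hK : IsCompact K)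
    (hfK : MapsTo f K K) : SurjOn f K K := by
  intro y hy
  have hy_closure : y ∈ closure (f '' K) := Metric.mem_closure_iff.2 fun ε hε => by
    obtain ⟨k, hk⟩ := hf.exists_dist_iterate_succ_lt hK hfK hy hε
    refine ⟨f^[k + 1] y, ?_, by rwa [dist_comm]⟩
    rw [Function.iterate_succ_apply']
    exact mem_image_of_mem f (hfK.iterate k hy)
  rwa [(hK.image hf.continuous).isClosed.closure_eq] at hy_closure

end Recurrence

section Orbits

variable {X : Type*} [MetricSpace X] (G : Subgroup (X ≃ᵢ X))

def isometryOrbit (a : X) : Set X := {x | ∃ g ∈ G, g a = x}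

theorem mem_isometryOrbit_self (a : X) : a ∈ isometryOrbit G a := ⟨1, G.one_mem, rfl⟩

theorem closure_isometryOrbit_subset {a b : X} (hb : b ∈ closure (isometryOrbit G a)) :
    closure (isometryOrbit G b) ⊆ closure (isometryOrbit G a) := by
  refine closure_minimal ?_ isClosed_closure
  rintro _ ⟨g, hg, rfl⟩
  refine map_mem_closure g.continuous hb ?_
  rintro _ ⟨h, hh, rfl⟩
  exact ⟨g * h, G.mul_mem hg hh, rfl⟩

theorem mapsTo_closure_isometryOrbit {ρ : X → X}
    (hρ : ∀ x, ∀ ε > 0, ∃ g ∈ G, dist (g x) (ρ x) < ε) (a : X) :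
    MapsTo ρ (closure (isometryOrbit G a)) (closure (isometryOrbit G a)) := by
  refine fun x hx => closure_isometryOrbit_subset G hx (Metric.mem_closure_iff.2 fun ε hε => ?_)
  obtain ⟨g, hg, hgx⟩ := hρ x ε hε
  exact ⟨g x, ⟨g, hg, rfl⟩, by rwa [dist_comm]⟩

end Orbits

theorem surjective_of_precompact_orbits_general {X : Type*} [MetricSpace X]
    (G : Subgroup (X ≃ᵢ X))
    (horb : ∀ a : X, IsCompact (closure {x | ∃ g ∈ G, g a = x}))
    (ρ : X → X)
    (hρ : ∀ (F : Finset X) (ε : ℝ), 0 < ε → ∃ g ∈ G, ∀ x ∈ F, dist (g x) (ρ x) < ε) :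
    Function.Surjective ρ := by
  classical
  have hρ_isometry : Isometry ρ := isometry_of_forall_approx fun a b ε hε => by
    obtain ⟨g, -, hg⟩ := hρ {a, b} ε hε
    exact ⟨g, g.isometry, hg a (by simp), hg b (by simp)⟩
  have hρ_orbit : ∀ x, ∀ ε > 0, ∃ g ∈ G, dist (g x) (ρ x) < ε := fun x ε hε => by
    obtain ⟨g, hg, hgx⟩ := hρ {x} ε hε
    exact ⟨g, hg, hgx x (Finset.mem_singleton_self x)⟩
  intro y
  obtain ⟨x, -, hx⟩ := hρ_isometry.surjOn_of_isCompact (horb y)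
    (mapsTo_closure_isometryOrbit G hρ_orbit y) (subset_closure (mem_isometryOrbit_self G y))
  exact ⟨x, hx⟩

/-- If a group `G` of isometries of a complete metric space `X` has all orbit closures
compact, then every pointwise limit `ρ` of elements of `G` is surjective. -/
theorem surjective_of_precompact_orbits {X : Type*} [MetricSpace X] [CompleteSpace X]
    (G : Subgroup (X ≃ᵢ X))
    (horb : ∀ a : X, IsCompact (closure {x | ∃ g ∈ G, g a = x}))
    (ρ : X → X)
    (hρ : ∀ (F : Finset X) (ε : ℝ), 0 < ε → ∃ g ∈ G, ∀ x ∈ F, dist (g x) (ρ x) < ε) :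
    Function.Surjective ρ :=
  surjective_of_precompact_orbits_general G horb ρ hρ
end

section
/- Let G ≤ Isom(X,d) with a ∈ X, ε > 0, and suppose there is N such that for every b ∈ G·a the set acl_δ(b) is covered by N balls of radius ε, while G·a contains points pairwise more than 10ε apart and points at distance > 5ε from any given union of N+1 such acl sets. Then there exist a_0, a_1 ∈ G·a such that a_0 ∉ acl_δ(a_1) and a_1 ∉ acl_δ(a_0). -/
/-! Pick `N + 1` orbit points `bᵢ` pairwise more than `10ε` apart and an orbit point `c` more
than `5ε` away from every `acl_δ(bᵢ)`. The `N` balls of radius `ε` covering `acl_δ(c)` cannot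
each catch two of the `bᵢ`, so some `bᵢ ∉ acl_δ(c)`; and `c ∉ acl_δ(bᵢ)` since `c` is at distance
`0` from itself. -/

open Metric Set

/-- The `δ`-approximate stabilizer of `b`. -/
def Stab {X : Type*} [MetricSpace X] (G : Subgroup (X ≃ᵢ X)) (b : X) (δ : ℝ) :
    Set (X ≃ᵢ X) :=
  {g | g ∈ G ∧ dist (g b) b < δ}

/-- `acl_δ(b)` at scale `ε`. -/
def acl {X : Type*} [MetricSpace X] (G : Subgroup (X ≃ᵢ X)) (b : X) (δ ε : ℝ) : Set X :=
  {y | y ∈ closure {z | ∃ g ∈ G, g b = z} ∧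
    ∃ s : Finset X, {z | ∃ g ∈ Stab G b δ, g y = z} ⊆ ⋃ c ∈ s, ball c ε}

theorem exists_notMem_iUnion_ball_of_card_lt {X ι : Type*} [PseudoMetricSpace X] [Fintype ι]
    {s : Finset X} (hs : s.card < Fintype.card ι) {ε : ℝ} {b : ι → X}
    (hb : Pairwise fun i j => 2 * ε ≤ dist (b i) (b j)) :
    ∃ i, b i ∉ ⋃ c ∈ s, ball c ε := by
  by_contra! hcov
  have hcenter : ∀ i, ∃ c : s, b i ∈ ball (c : X) ε := fun i => by
    simpa only [mem_iUnion, exists_prop, Subtype.exists] using hcov i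
  choose f hf using hcenter
  obtain ⟨i, j, hij, hfij⟩ := Fintype.exists_ne_map_eq_of_card_lt f (by simpa using hs)
  have hclose : dist (b i) (b j) < 2 * ε := calc
    dist (b i) (b j) ≤ dist (b i) (f i) + dist (b j) (f j) := by
      rw [hfij]; exact dist_triangle_right _ _ _
    _ < ε + ε := add_lt_add (hf i) (hf j)
    _ = 2 * ε := by ring
  exact (hb hij).not_gt hclose

theorem exists_mutually_nonAlgebraic_general {X : Type*} [MetricSpace X]
    (G : Subgroup (X ≃ᵢ X)) (a : X) (δ ε : ℝ) (hε : 0 < ε) (N : ℕ)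
    (hcover : ∀ b ∈ {z | ∃ g ∈ G, g a = z}, ∃ s : Finset X, s.card ≤ N ∧
      acl G b δ ε ⊆ ⋃ c ∈ s, ball c ε)
    (hsep : ∃ b : Fin (N + 1) → X, (∀ i, b i ∈ {z | ∃ g ∈ G, g a = z}) ∧
      ∀ i j, i ≠ j → 10 * ε < dist (b i) (b j))
    (hfar : ∀ b : Fin (N + 1) → X, (∀ i, b i ∈ {z | ∃ g ∈ G, g a = z}) →
      ∃ c ∈ {z | ∃ g ∈ G, g a = z}, ∀ i, ∀ y ∈ acl G (b i) δ ε, 5 * ε < dist c y) :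
    ∃ a₀ ∈ {z | ∃ g ∈ G, g a = z}, ∃ a₁ ∈ {z | ∃ g ∈ G, g a = z},
      a₀ ∉ acl G a₁ δ ε ∧ a₁ ∉ acl G a₀ δ ε := by
  obtain ⟨b, hb, hbsep⟩ := hsep
  obtain ⟨c, hc, hcfar⟩ := hfar b hb
  obtain ⟨s, hcard, hsub⟩ := hcover c hc
  obtain ⟨i, hi⟩ := exists_notMem_iUnion_ball_of_card_lt (b := b) (ε := ε)
    (by simpa using Nat.lt_succ_of_le hcard) fun i j hij => by linarith [hbsep i j hij]
  refine ⟨c, hc, b i, hb i, fun hc_mem => ?_, fun hb_mem => hi (hsub hb_mem)⟩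
  have := hcfar i c hc_mem
  rw [dist_self] at this
  linarith

/-- If each `acl_δ(b)` for `b` in the orbit of `a` is covered by `N` balls of radius `ε`,
while the orbit contains `N+1` points pairwise more than `10ε` apart and, for any choice
of `N+1` orbit points, a point at distance more than `5ε` from the union of their `acl`
sets, then there are `a₀, a₁` in the orbit with `a₀ ∉ acl_δ(a₁)` and `a₁ ∉ acl_δ(a₀)`. -/
theorem exists_mutually_nonAlgebraic {X : Type*} [MetricSpace X] [CompleteSpace X]
    (G : Subgroup (X ≃ᵢ X)) (a : X) (δ ε : ℝ) (hδ : 0 < δ) (hε : 0 < ε) (N : ℕ)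
    (hcover : ∀ b ∈ {z | ∃ g ∈ G, g a = z}, ∃ s : Finset X, s.card ≤ N ∧
      acl G b δ ε ⊆ ⋃ c ∈ s, ball c ε)
    (hsep : ∃ b : Fin (N + 1) → X, (∀ i, b i ∈ {z | ∃ g ∈ G, g a = z}) ∧
      ∀ i j, i ≠ j → 10 * ε < dist (b i) (b j))
    (hfar : ∀ b : Fin (N + 1) → X, (∀ i, b i ∈ {z | ∃ g ∈ G, g a = z}) →
      ∃ c ∈ {z | ∃ g ∈ G, g a = z}, ∀ i, ∀ y ∈ acl G (b i) δ ε, 5 * ε < dist c y) :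
    ∃ a₀ ∈ {z | ∃ g ∈ G, g a = z}, ∃ a₁ ∈ {z | ∃ g ∈ G, g a = z},
      a₀ ∉ acl G a₁ δ ε ∧ a₁ ∉ acl G a₀ δ ε :=
  exists_mutually_nonAlgebraic_general G a δ ε hε N hcover hsep hfar
end

section
/- If M is an approximately ultrahomogeneous Polish relational metric structure, then every morphism of M (a map preserving all predicates, in particular distance-preserving) is a pointwise limit of automorphisms of M. -/
open Metric Set

/-- Two `n`-tuples have the same quantifier-free type if all predicates (including the
distance) agree on all corresponding subtuples. -/
def SameQFType {M : Type*} [MetricSpace M] {ι : Type*} (k : ι → ℕ)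
    (P : ∀ i, (Fin (k i) → M) → ℝ) {n : ℕ} (a b : Fin n → M) : Prop :=
  (∀ s t, dist (a s) (a t) = dist (b s) (b t)) ∧
  ∀ (i : ι) (j : Fin (k i) → Fin n), P i (a ∘ j) = P i (b ∘ j)

/-- A morphism of the relational metric structure: a map preserving all predicates,
in particular (since the distance is among the predicates) distance-preserving. -/
def IsMorphism {M : Type*} [MetricSpace M] {ι : Type*} (k : ι → ℕ)
    (P : ∀ i, (Fin (k i) → M) → ℝ) (f : M → M) : Prop :=
  Isometry f ∧ ∀ (i : ι) (x : Fin (k i) → M), P i (f ∘ x) = P i x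

/-- An automorphism is a surjective morphism. -/
def IsAutomorphism {M : Type*} [MetricSpace M] {ι : Type*} (k : ι → ℕ)
    (P : ∀ i, (Fin (k i) → M) → ℝ) (f : M → M) : Prop :=
  IsMorphism k P f ∧ Function.Surjective f

/-- Approximate ultrahomogeneity: tuples with the same quantifier-free type can be
`ε`-matched by an automorphism. -/
def ApproxUltrahomogeneous {M : Type*} [MetricSpace M] {ι : Type*} (k : ι → ℕ)
    (P : ∀ i, (Fin (k i) → M) → ℝ) : Prop :=
  ∀ (n : ℕ) (a b : Fin n → M), SameQFType k P a b → ∀ ε : ℝ, 0 < ε →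
    ∃ g : M → M, IsAutomorphism k P g ∧ ∀ s, dist (g (a s)) (b s) ≤ ε

theorem IsMorphism.sameQFType {M : Type*} [MetricSpace M] {ι : Type*} {k : ι → ℕ}
    {P : ∀ i, (Fin (k i) → M) → ℝ} {ρ : M → M} (hρ : IsMorphism k P ρ) {n : ℕ}
    (a : Fin n → M) : SameQFType k P a (ρ ∘ a) :=
  ⟨fun s t => (hρ.1.dist_eq (a s) (a t)).symm, fun i j => (hρ.2 i (a ∘ j)).symm⟩

theorem morphism_pointwiseLimit_of_automorphisms_general {M : Type*} [MetricSpace M]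
    {ι : Type*} (k : ι → ℕ) (P : ∀ i, (Fin (k i) → M) → ℝ)
    (hhom : ApproxUltrahomogeneous k P)
    (ρ : M → M) (hρ : IsMorphism k P ρ) :
    ∀ (F : Finset M) (ε : ℝ), 0 < ε →
      ∃ g : M → M, IsAutomorphism k P g ∧ ∀ x ∈ F, dist (g x) (ρ x) < ε := by
  intro F ε hε
  let a : Fin F.card → M := fun s => F.equivFin.symm s
  obtain ⟨g, hg, hga⟩ := hhom _ a (ρ ∘ a) (hρ.sameQFType a) (ε / 2) (half_pos hε)
  refine ⟨g, hg, fun x hx => ?_⟩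
  have hax : a (F.equivFin ⟨x, hx⟩) = x := by simp [a]
  have hclose := hga (F.equivFin ⟨x, hx⟩)
  rw [Function.comp_apply, hax] at hclose
  exact hclose.trans_lt (half_lt_self hε)

/-- Every morphism of an approximately ultrahomogeneous Polish relational metric
structure is a pointwise limit of automorphisms. -/
theorem morphism_pointwiseLimit_of_automorphisms {M : Type*} [MetricSpace M]
    [CompleteSpace M] [TopologicalSpace.SeparableSpace M]
    (hd : ∀ x y : M, dist x y ≤ 1)
    {ι : Type*} (k : ι → ℕ) (P : ∀ i, (Fin (k i) → M) → ℝ)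
    (hUC : ∀ i, UniformContinuous (P i))
    (hrange : ∀ i x, P i x ∈ Set.Icc (0:ℝ) 1)
    (hhom : ApproxUltrahomogeneous k P)
    (ρ : M → M) (hρ : IsMorphism k P ρ) :
    ∀ (F : Finset M) (ε : ℝ), 0 < ε →
      ∃ g : M → M, IsAutomorphism k P g ∧ ∀ x ∈ F, dist (g x) (ρ x) < ε :=
  morphism_pointwiseLimit_of_automorphisms_general k P hhom ρ hρ
end

section
/- Let (X,d) be a Polish metric space with d ≤ 1 and G ≤ Isom(X,d) a closed subgroup. Define a relational metric structure M on X by adding, for each n and each closure-of-diagonal-orbit class C ⊆ X^n, the predicate P_C(x) = min(1, d_∞(x, C)). Then every element of G is an automorphism of M, and M is approximately ultrahomogeneous. -/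
/-
Each predicate `P_C` only sees the orbit closure `C`, which every `g ∈ G` maps onto itself
isometrically, so `g` preserves `P_C`. Conversely, if `b` has the quantifier-free type of `a`,
then `P_C(b) = P_C(a) = 0` for `C` the orbit closure of `a`, i.e. `b` lies in the closure of
`G·a`, and an element of `G` moving `a` to within `ε` of `b` is the required automorphism.
-/

open Metric Set

/-- The predicates of the canonical structure on `X` associated with `G ≤ Isom(X,d)`:
for each `n` and each tuple `y : Fin n → X`, the predicate measuring (truncated)
sup-distance to the closure of the diagonal `G`-orbit of `y`. -/
noncomputable def orbitPred {X : Type*} [MetricSpace X] (G : Subgroup (X ≃ᵢ X)) :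
    ∀ p : (Σ n : ℕ, Fin n → X), (Fin p.1 → X) → ℝ :=
  fun p x => min 1 (infDist x (closure {w : Fin p.1 → X | ∃ g ∈ G, (fun i => g (p.2 i)) = w}))

theorem Metric.infDist_apply_eq_of_image_eq {α : Type*} [PseudoMetricSpace α] {Φ : α → α}
    (hΦ : Isometry Φ) {s : Set α} (hs : Φ '' s = s) (x : α) :
    infDist (Φ x) s = infDist x s := by
  simpa only [hs] using infDist_image hΦ (x := x) (t := s)

section DiagOrbit

variable {X : Type*} [PseudoMetricSpace X] (G : Subgroup (X ≃ᵢ X))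

def diagOrbit {ι : Type*} (y : ι → X) : Set (ι → X) :=
  {w | ∃ g ∈ G, (fun i => g (y i)) = w}

variable {G}

theorem mem_diagOrbit_self {ι : Type*} (y : ι → X) : y ∈ diagOrbit G y :=
  ⟨1, one_mem G, rfl⟩

theorem image_comp_diagOrbit {g : X ≃ᵢ X} (hg : g ∈ G) {ι : Type*} (y : ι → X) :
    (⇑g ∘ ·) '' diagOrbit G y = diagOrbit G y := by
  ext w
  constructor
  · rintro ⟨-, ⟨h, hh, rfl⟩, rfl⟩
    exact ⟨g * h, mul_mem hg hh, rfl⟩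
  · rintro ⟨h, hh, rfl⟩
    refine ⟨fun i => (g⁻¹ * h) (y i), ⟨g⁻¹ * h, mul_mem (inv_mem hg) hh, rfl⟩, ?_⟩
    funext i
    simp [IsometryEquiv.mul_apply]

theorem exists_dist_le_of_mem_closure_diagOrbit {ι : Type*} [Fintype ι] {a b : ι → X}
    (hb : b ∈ closure (diagOrbit G a)) {ε : ℝ} (hε : 0 < ε) :
    ∃ g ∈ G, ∀ s, dist (g (a s)) (b s) ≤ ε := by
  obtain ⟨-, ⟨g, hg, rfl⟩, hdist⟩ := Metric.mem_closure_iff.mp hb ε hε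
  refine ⟨g, hg, fun s => ?_⟩
  rw [dist_comm] at hdist
  exact (dist_le_pi_dist (fun i => g (a i)) b s).trans hdist.le

end DiagOrbit

section OrbitPred

variable {X : Type*} [MetricSpace X] {G : Subgroup (X ≃ᵢ X)}

theorem orbitPred_eq (p : Σ n : ℕ, Fin n → X) (x : Fin p.1 → X) :
    orbitPred G p x = min 1 (infDist x (diagOrbit G p.2)) := by
  rw [orbitPred, infDist_closure]
  rfl

theorem orbitPred_comp {g : X ≃ᵢ X} (hg : g ∈ G) (p : Σ n : ℕ, Fin n → X)
    (x : Fin p.1 → X) : orbitPred G p (⇑g ∘ x) = orbitPred G p x := by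
  have hiso : Isometry (⇑g ∘ · : (Fin p.1 → X) → Fin p.1 → X) :=
    Isometry.piMap (fun _ => g) fun _ => g.isometry
  rw [orbitPred_eq, orbitPred_eq,
    infDist_apply_eq_of_image_eq hiso (image_comp_diagOrbit hg p.2)]

theorem isAutomorphism_of_mem {g : X ≃ᵢ X} (hg : g ∈ G) :
    IsAutomorphism (fun p : (Σ n : ℕ, Fin n → X) => p.1) (orbitPred G) ⇑g :=
  ⟨⟨g.isometry, orbitPred_comp hg⟩, g.surjective⟩

theorem orbitPred_eq_zero_iff (p : Σ n : ℕ, Fin n → X) (x : Fin p.1 → X) :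
    orbitPred G p x = 0 ↔ x ∈ closure (diagOrbit G p.2) := by
  rw [mem_closure_iff_infDist_zero ⟨p.2, mem_diagOrbit_self p.2⟩, orbitPred_eq,
    min_eq_iff]
  constructor
  · rintro (⟨h, -⟩ | ⟨h, -⟩)
    · exact absurd h one_ne_zero
    · exact h
  · intro h
    exact Or.inr ⟨h, h ▸ zero_le_one⟩

theorem SameQFType.mem_closure_diagOrbit {n : ℕ} {a b : Fin n → X}
    (hab : SameQFType (fun p : (Σ n : ℕ, Fin n → X) => p.1) (orbitPred G) a b) :
    b ∈ closure (diagOrbit G a) := by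
  have ha : orbitPred G ⟨n, a⟩ a = 0 :=
    (orbitPred_eq_zero_iff _ _).mpr (subset_closure (mem_diagOrbit_self a))
  exact (orbitPred_eq_zero_iff ⟨n, a⟩ b).mp (ha ▸ (hab.2 ⟨n, a⟩ id).symm)

end OrbitPred

theorem orbitStructure_autos_and_homogeneous_general {X : Type*} [MetricSpace X]
    (G : Subgroup (X ≃ᵢ X)) :
    (∀ g ∈ G, IsAutomorphism (fun p : (Σ n : ℕ, Fin n → X) => p.1) (orbitPred G) ⇑g) ∧
    ApproxUltrahomogeneous (fun p : (Σ n : ℕ, Fin n → X) => p.1) (orbitPred G) := by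
  refine ⟨fun g hg => isAutomorphism_of_mem hg, fun n a b hab ε hε => ?_⟩
  obtain ⟨g, hg, hclose⟩ :=
    exists_dist_le_of_mem_closure_diagOrbit hab.mem_closure_diagOrbit hε
  exact ⟨g, isAutomorphism_of_mem hg, hclose⟩

/-- Every element of `G` is an automorphism of the structure `M` obtained by adding to
`X` the distance-to-orbit-closure predicates, and this structure is approximately
ultrahomogeneous. -/
theorem orbitStructure_autos_and_homogeneous {X : Type*} [MetricSpace X]
    [CompleteSpace X] [TopologicalSpace.SeparableSpace X]
    (hd : ∀ x y : X, dist x y ≤ 1) (G : Subgroup (X ≃ᵢ X)) :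
    (∀ g ∈ G, IsAutomorphism (fun p : (Σ n : ℕ, Fin n → X) => p.1) (orbitPred G) ⇑g) ∧
    ApproxUltrahomogeneous (fun p : (Σ n : ℕ, Fin n → X) => p.1) (orbitPred G) :=
  orbitStructure_autos_and_homogeneous_general G
end

section
/- Let (z_n) be a dense sequence in a metric space X and ε > 0. Then there exists a uniformly continuous function f : X² → [0,1] such that for every n, f = 1 on B(z_n, ε/10) × (X \ ⋃_{m ≤ n} B(z_m, ε/2)) and f = 0 on (X \ ⋃_{m < n} B(z_m, ε/2)) × B(z_n, ε/10). -/
/-!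
Each point of `B(z_n, ε/10) × (X \ ⋃_{m ≤ n} B(z_m, ε/2))` is at distance at least `2ε/5` from
each point of `(X \ ⋃_{m < k} B(z_m, ε/2)) × B(z_k, ε/10)`: compare second coordinates at the
centre `z_k` when `k ≤ n`, first coordinates at `z_n` when `n < k`. A Lipschitz thickened
indicator of the first family, at scale `2ε/5`, therefore vanishes on the second.
-/

open Metric Set

theorem exists_uniformContinuous_eqOn_one_eqOn_zero {α : Type*} [PseudoMetricSpace α]
    {s t : Set α} {δ : ℝ} (hδ : 0 < δ) (hst : ∀ x ∈ s, ∀ y ∈ t, δ ≤ dist x y) :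
    ∃ f : α → ℝ, UniformContinuous f ∧ (∀ x, f x ∈ Icc (0 : ℝ) 1) ∧
      EqOn f 1 s ∧ EqOn f 0 t := by
  refine ⟨fun x => thickenedIndicator hδ s x,
    uniformContinuous_subtype_val.comp (lipschitzWith_thickenedIndicator hδ s).uniformContinuous,
    fun x => ⟨NNReal.coe_nonneg _, by exact_mod_cast thickenedIndicator_le_one hδ s x⟩,
    fun x hx => by simp [thickenedIndicator_one hδ s hx], fun y hy => ?_⟩
  have hy' : y ∉ thickening δ s := by
    rw [mem_thickening_iff]
    rintro ⟨x, hx, hxy⟩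
    exact (hst x hx y hy).not_gt (dist_comm x y ▸ hxy)
  simp [thickenedIndicator_zero hδ s hy']

theorem sub_le_dist_of_mem_ball_of_notMem_ball {α : Type*} [PseudoMetricSpace α]
    {c x y : α} {r R : ℝ} (hx : x ∈ ball c r) (hy : y ∉ ball c R) : R - r ≤ dist x y := by
  rw [mem_ball] at hx
  rw [mem_ball, not_lt] at hy
  linarith [dist_triangle_left y c x]

theorem sub_le_dist_of_mem_ball_prod_of_notMem_iUnion_ball {α : Type*} [PseudoMetricSpace α]
    {z : ℕ → α} {r R : ℝ} {n k : ℕ} {x y u v : α}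
    (hx : x ∈ ball (z n) r) (hy : y ∉ ⋃ m ≤ n, ball (z m) R)
    (hu : u ∉ ⋃ m < k, ball (z m) R) (hv : v ∈ ball (z k) r) :
    R - r ≤ dist (x, y) (u, v) := by
  simp only [mem_iUnion, not_exists] at hy hu
  rw [Prod.dist_eq]
  rcases le_or_gt k n with hkn | hnk
  · calc R - r ≤ dist y v := dist_comm v y ▸ sub_le_dist_of_mem_ball_of_notMem_ball hv (hy k hkn)
      _ ≤ _ := le_max_right _ _
  · calc R - r ≤ dist x u := sub_le_dist_of_mem_ball_of_notMem_ball hx (hu n hnk)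
      _ ≤ _ := le_max_left _ _

theorem exists_oscillating_function_general {X : Type*} [MetricSpace X]
    (z : ℕ → X) (ε : ℝ) (hε : 0 < ε) :
    ∃ f : X × X → ℝ, UniformContinuous f ∧ (∀ p, f p ∈ Set.Icc (0:ℝ) 1) ∧
      (∀ n : ℕ, ∀ x ∈ ball (z n) (ε / 10), ∀ y ∉ ⋃ m ≤ n, ball (z m) (ε / 2),
        f (x, y) = 1) ∧
      (∀ n : ℕ, ∀ x ∉ ⋃ m < n, ball (z m) (ε / 2), ∀ y ∈ ball (z n) (ε / 10),
        f (x, y) = 0) := by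
  set ones := ⋃ n, ball (z n) (ε / 10) ×ˢ (⋃ m ≤ n, ball (z m) (ε / 2))ᶜ
  set zeros := ⋃ n, (⋃ m < n, ball (z m) (ε / 2))ᶜ ×ˢ ball (z n) (ε / 10)
  have separated : ∀ p ∈ ones, ∀ q ∈ zeros, ε / 2 - ε / 10 ≤ dist p q := by
    simp only [ones, zeros, mem_iUnion]
    rintro ⟨x, y⟩ ⟨n, hx, hy⟩ ⟨u, v⟩ ⟨k, hu, hv⟩
    exact sub_le_dist_of_mem_ball_prod_of_notMem_iUnion_ball hx hy hu hv
  obtain ⟨f, hf, hf01, hf1, hf0⟩ :=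
    exists_uniformContinuous_eqOn_one_eqOn_zero (by linarith) separated
  exact ⟨f, hf, hf01, fun n x hx y hy => hf1 (mem_iUnion.2 ⟨n, hx, hy⟩),
    fun n x hx y hy => hf0 (mem_iUnion.2 ⟨n, hx, hy⟩)⟩

/-- Given a dense sequence `(z_n)` in a metric space `X` and `ε > 0`, there is a uniformly
continuous `f : X² → [0,1]` which, for every `n`, equals `1` on
`B(z_n, ε/10) × (X \ ⋃_{m ≤ n} B(z_m, ε/2))` and `0` on
`(X \ ⋃_{m < n} B(z_m, ε/2)) × B(z_n, ε/10)`. -/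
theorem exists_oscillating_function {X : Type*} [MetricSpace X]
    (z : ℕ → X) (hz : DenseRange z) (ε : ℝ) (hε : 0 < ε) :
    ∃ f : X × X → ℝ, UniformContinuous f ∧ (∀ p, f p ∈ Set.Icc (0:ℝ) 1) ∧
      (∀ n : ℕ, ∀ x ∈ ball (z n) (ε / 10), ∀ y ∉ ⋃ m ≤ n, ball (z m) (ε / 2),
        f (x, y) = 1) ∧
      (∀ n : ℕ, ∀ x ∉ ⋃ m < n, ball (z m) (ε / 2), ∀ y ∈ ball (z n) (ε / 10),
        f (x, y) = 0) :=
  exists_oscillating_function_general z ε hε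
end
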